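/- arXiv:1711.01256 — 2 statements merged into one kernel-verified Lean document; each statement's English description precedes it below -/
import Mathlib

section
/- Consider the system of formal power series equations over ℚ[[t]]: v₁ = 1 + t·v₁; v₅ = 1 + t·v₅ + t·v₆; v₆ = 1 + t·v₆ + t·v₅; v₂ = 1 + t·v₂ + t·v₃ + t·v₆ + t·v₅ + t·v₁; v₃ = 1 + t·v₃ + t·v₂ + t·v₅ + t·v₆ + t·v₁; v₄ = 1 + t·v₄ + 2t·v₆ + 2t·v₅; B = 1 + 2t·v₂ + 2t·v₃ + t·v₁ + 2t·v₅ + 2t·v₆ + t·v₄. Then this system has a unique solution in ℚ[[t]], and B satisfies 4Bt³ − 8Bt² − 4t³ + 5Bt − 8t² − B + 5t + 1 = 0. -/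
/-!
Subtracting the equations of `v₅` and `v₆` (resp. `v₂` and `v₃`) gives `v₆ = v₅` and `v₃ = v₂`.
What remains is triangular, with diagonal coefficients `1 - t` and `1 - 2t`, which are units of
`k[[t]]`; so the system is solved uniquely by back-substitution, and eliminating the unknowns gives
`(1 - t)(1 - 2t)² B = 1 + 5t - 8t² - 4t³`.
-/

open PowerSeries

namespace B3Grammar

section CommRing

variable {R : Type*} [CommRing R]

def GrammarSystem (v₁ v₅ v₆ v₂ v₃ v₄ B : R⟦X⟧) : Prop :=
  v₁ = 1 + X * v₁ ∧
  v₅ = 1 + X * v₅ + X * v₆ ∧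
  v₆ = 1 + X * v₆ + X * v₅ ∧
  v₂ = 1 + X * v₂ + X * v₃ + X * v₆ + X * v₅ + X * v₁ ∧
  v₃ = 1 + X * v₃ + X * v₂ + X * v₅ + X * v₆ + X * v₁ ∧
  v₄ = 1 + X * v₄ + 2 * X * v₆ + 2 * X * v₅ ∧
  B = 1 + 2 * X * v₂ + 2 * X * v₃ + X * v₁ + 2 * X * v₅ + 2 * X * v₆ + X * v₄

def TriangularSystem (v₁ v₅ v₆ v₂ v₃ v₄ B : R⟦X⟧) : Prop :=
  v₁ * (1 - X) = 1 ∧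
  v₅ * (1 - 2 * X) = 1 ∧
  v₆ = v₅ ∧
  v₂ * (1 - 2 * X) = 1 + 2 * X * v₅ + X * v₁ ∧
  v₃ = v₂ ∧
  v₄ * (1 - X) = 1 + 4 * X * v₅ ∧
  B = 1 + 4 * X * v₂ + X * v₁ + 4 * X * v₅ + X * v₄

theorem grammarSystem_iff_triangularSystem {v₁ v₅ v₆ v₂ v₃ v₄ B : R⟦X⟧} :
    GrammarSystem v₁ v₅ v₆ v₂ v₃ v₄ B ↔ TriangularSystem v₁ v₅ v₆ v₂ v₃ v₄ B := by
  constructor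
  · rintro ⟨h₁, h₅, h₆, h₂, h₃, h₄, hB⟩
    have h₆₅ : v₆ = v₅ := by linear_combination h₆ - h₅
    have h₃₂ : v₃ = v₂ := by linear_combination h₃ - h₂
    refine ⟨by linear_combination h₁, by linear_combination h₅ + X * h₆₅, h₆₅,
      by linear_combination h₂ + X * h₃₂ + X * h₆₅, h₃₂, by linear_combination h₄ + 2 * X * h₆₅,
      by linear_combination hB + 2 * X * h₃₂ + 2 * X * h₆₅⟩
  · rintro ⟨h₁, h₅, rfl, h₂, rfl, h₄, hB⟩
    exact ⟨by linear_combination h₁, by linear_combination h₅, by linear_combination h₅,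
      by linear_combination h₂, by linear_combination h₂, by linear_combination h₄,
      by linear_combination hB⟩

theorem TriangularSystem.mul_B_eq {v₁ v₅ v₆ v₂ v₃ v₄ B : R⟦X⟧}
    (h : TriangularSystem v₁ v₅ v₆ v₂ v₃ v₄ B) :
    (1 - X) * (1 - 2 * X) ^ 2 * B = 1 + 5 * X - 8 * X ^ 2 - 4 * X ^ 3 := by
  obtain ⟨h₁, h₅, -, h₂, -, h₄, hB⟩ := h
  linear_combination (1 - X) * (1 - 2 * X) ^ 2 * hB + 4 * X * (1 - X) * (1 - 2 * X) * h₂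
    + X * (1 - 2 * X) * (1 + 2 * X) * h₁ + X * (1 - 2 * X) ^ 2 * h₄
    + 4 * X * (1 - 2 * X ^ 2) * h₅

end CommRing

section Field

variable {k : Type*} [Field k]

noncomputable def solution : k⟦X⟧ × k⟦X⟧ × k⟦X⟧ × k⟦X⟧ × k⟦X⟧ × k⟦X⟧ × k⟦X⟧ :=
  let v₁ := (1 - X)⁻¹
  let v₅ := (1 - 2 * X)⁻¹
  let v₂ := (1 + 2 * X * v₅ + X * v₁) * (1 - 2 * X)⁻¹
  let v₄ := (1 + 4 * X * v₅) * (1 - X)⁻¹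
  (v₁, v₅, v₅, v₂, v₂, v₄, 1 + 4 * X * v₂ + X * v₁ + 4 * X * v₅ + X * v₄)

theorem triangularSystem_iff_eq_solution (s : k⟦X⟧ × k⟦X⟧ × k⟦X⟧ × k⟦X⟧ × k⟦X⟧ × k⟦X⟧ × k⟦X⟧) :
    TriangularSystem s.1 s.2.1 s.2.2.1 s.2.2.2.1 s.2.2.2.2.1 s.2.2.2.2.2.1 s.2.2.2.2.2.2 ↔
      s = solution := by
  have h₁ : constantCoeff (1 - X : k⟦X⟧) ≠ 0 := by simp
  have h₂ : constantCoeff (1 - 2 * X : k⟦X⟧) ≠ 0 := by simp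
  obtain ⟨v₁, v₅, v₆, v₂, v₃, v₄, B⟩ := s
  simp only [TriangularSystem, ← eq_mul_inv_iff_mul_eq h₁, ← eq_mul_inv_iff_mul_eq h₂, one_mul]
  constructor
  · rintro ⟨rfl, rfl, rfl, rfl, rfl, rfl, rfl⟩
    rfl
  · intro h
    obtain ⟨rfl, rfl, rfl, rfl, rfl, rfl, rfl⟩ := Prod.ext_iff.mp h
    exact ⟨rfl, rfl, rfl, rfl, rfl, rfl, rfl⟩

end Field

end B3Grammar

open B3Grammar in
theorem B3_grammar_system :
    (∃! s : PowerSeries ℚ × PowerSeries ℚ × PowerSeries ℚ × PowerSeries ℚ ×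
        PowerSeries ℚ × PowerSeries ℚ × PowerSeries ℚ,
      s.1 = 1 + X * s.1 ∧
      s.2.1 = 1 + X * s.2.1 + X * s.2.2.1 ∧
      s.2.2.1 = 1 + X * s.2.2.1 + X * s.2.1 ∧
      s.2.2.2.1 = 1 + X * s.2.2.2.1 + X * s.2.2.2.2.1 + X * s.2.2.1 +
        X * s.2.1 + X * s.1 ∧
      s.2.2.2.2.1 = 1 + X * s.2.2.2.2.1 + X * s.2.2.2.1 + X * s.2.1 +
        X * s.2.2.1 + X * s.1 ∧
      s.2.2.2.2.2.1 = 1 + X * s.2.2.2.2.2.1 + 2 * X * s.2.2.1 +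
        2 * X * s.2.1 ∧
      s.2.2.2.2.2.2 = 1 + 2 * X * s.2.2.2.1 + 2 * X * s.2.2.2.2.1 +
        X * s.1 + 2 * X * s.2.1 + 2 * X * s.2.2.1 + X * s.2.2.2.2.2.1) ∧
    (∀ v₁ v₅ v₆ v₂ v₃ v₄ B : PowerSeries ℚ,
      v₁ = 1 + X * v₁ →
      v₅ = 1 + X * v₅ + X * v₆ →
      v₆ = 1 + X * v₆ + X * v₅ →
      v₂ = 1 + X * v₂ + X * v₃ + X * v₆ + X * v₅ + X * v₁ →
      v₃ = 1 + X * v₃ + X * v₂ + X * v₅ + X * v₆ + X * v₁ →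
      v₄ = 1 + X * v₄ + 2 * X * v₆ + 2 * X * v₅ →
      B = 1 + 2 * X * v₂ + 2 * X * v₃ + X * v₁ + 2 * X * v₅ + 2 * X * v₆ +
        X * v₄ →
      4 * B * X ^ 3 - 8 * B * X ^ 2 - 4 * X ^ 3 + 5 * B * X - 8 * X ^ 2
        - B + 5 * X + 1 = 0) := by
  refine ⟨(existsUnique_congr fun s => grammarSystem_iff_triangularSystem.trans
    (triangularSystem_iff_eq_solution s)).mpr existsUnique_eq, ?_⟩
  intro v₁ v₅ v₆ v₂ v₃ v₄ B h₁ h₅ h₆ h₂ h₃ h₄ hB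
  have key := (grammarSystem_iff_triangularSystem.mp ⟨h₁, h₅, h₆, h₂, h₃, h₄, hB⟩).mul_B_eq
  linear_combination -key
end

section
/- The generating function of a regular language as counted by word length is rational: if L ⊆ Σ* is accepted by a deterministic finite automaton with state set Q, then the formal power series ∑_{n} |{w ∈ L : |w| = n}|·tⁿ over ℚ is the power series expansion of a rational function p(t)/q(t) with q(0) ≠ 0. -/
/-!
Let `c_s(n)` count the words of length `n` leading from the state `s` into an accepting state.
Splitting off the first letter gives `c(n+1) = A c(n)`, where `A s t` is the number of letters
taking `s` to `t`; so the vector `f` of generating functions solves `(1 - tA) f = 𝟙_F`, where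
`F` is the set of accepting states.
Multiplying by the adjugate of `1 - tA` shows that `det (1 - tA) • f` is a vector of polynomials,
and `det (1 - tA)`, the reversed characteristic polynomial of `A`, has constant term `1`.
-/

open PowerSeries Polynomial Matrix

namespace Matrix

variable {R σ : Type*} [CommRing R] [Fintype σ] [DecidableEq σ]

theorem map_coe_one_sub_X_smul (A : Matrix σ σ R) :
    (Polynomial.coeToPowerSeries.ringHom (R := R)).mapMatrix (1 - (X : R[X]) • A.map Polynomial.C)
      = 1 - (PowerSeries.X : R⟦X⟧) • A.map PowerSeries.C := by
  rw [map_sub, map_one]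
  congr 1
  ext s t
  simp only [RingHom.mapMatrix_apply, map_apply, smul_apply, smul_eq_mul, map_mul,
    coeToPowerSeries.ringHom_apply, Polynomial.coe_X, Polynomial.coe_C]

theorem exists_charpolyRev_mul_eq_coe_of_eq_C_add_X_smul
    {A : Matrix σ σ R} {v : σ → R} {f : σ → R⟦X⟧}
    (hf : f = PowerSeries.C ∘ v + (PowerSeries.X : R⟦X⟧) • (A.map PowerSeries.C *ᵥ f)) :
    ∃ p : σ → R[X], ∀ s, (A.charpolyRev : R⟦X⟧) * f s = p s := by
  set φ := Polynomial.coeToPowerSeries.ringHom (R := R)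
  set B := 1 - (X : R[X]) • A.map Polynomial.C
  have hB : φ.mapMatrix B *ᵥ f = PowerSeries.C ∘ v := by
    rw [map_coe_one_sub_X_smul, sub_mulVec, one_mulVec, smul_mulVec]
    exact sub_eq_of_eq_add hf
  have hdet : φ B.det • f = (φ.mapMatrix B).adjugate *ᵥ (PowerSeries.C ∘ v) := by
    rw [← hB, mulVec_mulVec, adjugate_mul, smul_mulVec, one_mulVec, RingHom.map_det]
  refine ⟨B.adjugate *ᵥ (Polynomial.C ∘ v), fun s => ?_⟩
  change φ B.det * f s = φ ((B.adjugate *ᵥ (Polynomial.C ∘ v)) s)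
  have hC : φ ∘ Polynomial.C ∘ v = PowerSeries.C ∘ v := funext fun _ => coe_C _
  rw [RingHom.map_mulVec, ← RingHom.mapMatrix_apply, RingHom.map_adjugate, hC]
  exact congrFun hdet s

end Matrix

namespace DFA

variable {α σ : Type*} (M : DFA α σ)

noncomputable def countFrom (s : σ) (n : ℕ) : ℕ :=
  Nat.card {w : List α // w.length = n ∧ M.evalFrom s w ∈ M.accept}

noncomputable def transitionMatrix (R : Type*) [Semiring R] : Matrix σ σ R :=
  Matrix.of fun s t => (Nat.card {a : α // M.step s a = t} : R)

theorem transitionMatrix_mulVec [Fintype α] [Fintype σ] {R : Type*} [Semiring R]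
    (u : σ → R) (s : σ) :
    (M.transitionMatrix R *ᵥ u) s = ∑ a, u (M.step s a) := by
  classical
  rw [← Fintype.sum_fiberwise' (M.step s)]
  refine Finset.sum_congr rfl fun t _ => ?_
  simp [transitionMatrix, Nat.card_eq_fintype_card, nsmul_eq_mul]

theorem countFrom_zero (s : σ) : M.countFrom s 0 = M.accept.indicator 1 s := by
  classical
  simp only [countFrom, List.length_eq_zero_iff, Set.indicator_apply, Pi.one_apply]
  split_ifs with h
  · rw [Nat.card_eq_one_iff_exists]
    exact ⟨⟨[], rfl, h⟩, fun ⟨w, hw, _⟩ => Subtype.ext hw⟩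
  · rw [Nat.card_eq_zero]
    exact Or.inl ⟨fun ⟨w, hw, hacc⟩ => h (by rwa [hw] at hacc)⟩

def acceptedSuccEquiv (s : σ) (n : ℕ) :
    {w : List α // w.length = n + 1 ∧ M.evalFrom s w ∈ M.accept} ≃
      Σ a : α, {w : List α // w.length = n ∧ M.evalFrom (M.step s a) w ∈ M.accept} where
  toFun
    | ⟨a :: w, hw, hacc⟩ => ⟨a, w, Nat.succ.inj hw, hacc⟩
  invFun x := ⟨x.1 :: x.2.1, congrArg Nat.succ x.2.2.1, x.2.2.2⟩
  left_inv
    | ⟨_ :: _, _, _⟩ => rfl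
  right_inv _ := rfl

theorem countFrom_succ [Fintype α] (s : σ) (n : ℕ) :
    M.countFrom s (n + 1) = ∑ a, M.countFrom (M.step s a) n := by
  have : ∀ (t : σ), Finite {w : List α // w.length = n ∧ M.evalFrom t w ∈ M.accept} :=
    fun t => (List.finite_length_eq α n).subset fun _ hw => hw.1
  rw [countFrom, Nat.card_congr (M.acceptedSuccEquiv s n), Nat.card_sigma]
  rfl

noncomputable def countGF (R : Type*) [Semiring R] (s : σ) : R⟦X⟧ :=
  PowerSeries.mk fun n => (M.countFrom s n : R)

theorem transitionMatrix_map_C (R : Type*) [Semiring R] :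
    (M.transitionMatrix R).map PowerSeries.C = M.transitionMatrix R⟦X⟧ := by
  ext s t
  simp [transitionMatrix]

theorem countGF_eq_indicator_add_X_smul [Fintype α] [Fintype σ] (R : Type*) [Semiring R] :
    M.countGF R = PowerSeries.C ∘ M.accept.indicator 1 +
      (PowerSeries.X : R⟦X⟧) • ((M.transitionMatrix R).map PowerSeries.C *ᵥ M.countGF R) := by
  funext s
  rw [transitionMatrix_map_C]
  ext (_ | n)
  · by_cases hs : s ∈ M.accept <;> simp [countGF, countFrom_zero, hs]
  · simp [countGF, countFrom_succ, transitionMatrix_mulVec]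

end DFA

theorem regular_language_rational_gf {α σ : Type} [Fintype α] [Fintype σ]
    (M : DFA α σ) :
    ∃ p q : Polynomial ℚ, q.coeff 0 ≠ 0 ∧
      (PowerSeries.mk fun n : ℕ =>
          (Nat.card {w : List α // w.length = n ∧ w ∈ M.accepts} : ℚ)) *
        (q : PowerSeries ℚ) = (p : PowerSeries ℚ) := by
  classical
  obtain ⟨p, hp⟩ :=
    Matrix.exists_charpolyRev_mul_eq_coe_of_eq_C_add_X_smul (M.countGF_eq_indicator_add_X_smul ℚ)
  refine ⟨p M.start, (M.transitionMatrix ℚ).charpolyRev, ?_, ?_⟩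
  · simp [Polynomial.coeff_zero_eq_eval_zero]
  · exact (mul_comm _ _).trans (hp M.start)
end
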